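/- For all integers n ≥ 1, (1 + 1/n)^α ≤ Ω_n²/(Ω_{n-1} Ω_{n+1}) ≤ (1 + 1/n)^(1/2), where α = 2 - (log π)/log 2, and these exponents are best possible. -/

import Mathlib

/-!
Write `f x = Γ(x + 1) / Γ(x + 1/2)`. Since the powers of `π` cancel, the ratio
`Ω_n² / (Ω_{n-1} Ω_{n+1})` equals `(x + 1/2) / f(x)²` at `x = n/2`. Watson's bound
`x + 1/4 ≤ f(x)²`, combined with the identity `f(x) f(x + 1/2) = x + 1/2`, traps
`f(x)²` between `x + 1/4` and `(x + 1/2)² / (x + 3/4)`. The lower end gives the exponent `1/2`,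
and the upper end shows that it is sharp as `n → ∞`; with Bernoulli's inequality the upper end
also gives the exponent `α = 2 - log π / log 2` for `n ≥ 3`. For `n = 1, 2` the ratio is
computed exactly from `Γ(1/2) = √π`; at `n = 1` it equals `4/π = 2^α`, which makes `α` best
possible.
-/

open Real

/-- The volume of the unit ball in ℝⁿ. -/
noncomputable def unitBallVolume (n : ℕ) : ℝ := π ^ ((n : ℝ) / 2) / Real.Gamma ((n : ℝ) / 2 + 1)

open Filter

noncomputable def gammaHalfRatio (x : ℝ) : ℝ := Gamma (x + 1) / Gamma (x + 1 / 2)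

section gammaHalfRatio

variable {x : ℝ}

lemma gammaHalfRatio_pos (hx : -(1 / 2) < x) : 0 < gammaHalfRatio x :=
  div_pos (Gamma_pos_of_pos (by linarith)) (Gamma_pos_of_pos (by linarith))

lemma gammaHalfRatio_add_one (hx : -(1 / 2) < x) :
    gammaHalfRatio (x + 1) = gammaHalfRatio x * ((x + 1) / (x + 1 / 2)) := by
  have h₁ : 0 < Gamma (x + 1 / 2) := Gamma_pos_of_pos (by linarith)
  have h₂ : x + 1 / 2 ≠ 0 := by linarith
  rw [gammaHalfRatio, gammaHalfRatio, Gamma_add_one (by linarith),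
    show x + 1 + 1 / 2 = x + 1 / 2 + 1 by ring, Gamma_add_one h₂]
  field_simp

lemma gammaHalfRatio_mul_gammaHalfRatio_add_half (hx : -(1 / 2) < x) :
    gammaHalfRatio x * gammaHalfRatio (x + 1 / 2) = x + 1 / 2 := by
  have h₁ : 0 < Gamma (x + 1 / 2) := Gamma_pos_of_pos (by linarith)
  have h₂ : 0 < Gamma (x + 1) := Gamma_pos_of_pos (by linarith)
  rw [gammaHalfRatio, gammaHalfRatio, Gamma_add_one (s := x + 1 / 2) (by linarith),
    show x + 1 / 2 + 1 / 2 = x + 1 by ring, div_mul_div_comm, div_eq_iff (by positivity)]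
  ring

lemma Gamma_add_half_sq_le (hx : 0 < x) : Gamma (x + 1 / 2) ^ 2 ≤ Gamma x * Gamma (x + 1) := by
  have h := Gamma_mul_add_mul_le_rpow_Gamma_mul_rpow_Gamma hx (by linarith : 0 < x + 1)
    (by norm_num : (0 : ℝ) < 1 / 2) (by norm_num : (0 : ℝ) < 1 / 2) (by norm_num)
  rw [show 1 / 2 * x + 1 / 2 * (x + 1) = x + 1 / 2 by ring, ← sqrt_eq_rpow, ← sqrt_eq_rpow,
    ← sqrt_mul (Gamma_pos_of_pos hx).le] at h
  exact (le_sqrt (Gamma_pos_of_pos (by linarith)).le (by positivity)).1 h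

lemma self_le_gammaHalfRatio_sq (hx : 0 < x) : x ≤ gammaHalfRatio x ^ 2 := by
  have h₁ : 0 < Gamma (x + 1 / 2) := Gamma_pos_of_pos (by linarith)
  have hΓ : Gamma x = Gamma (x + 1) / x := by rw [Gamma_add_one hx.ne']; field_simp
  have h := Gamma_add_half_sq_le hx
  rw [hΓ, div_mul_eq_mul_div, le_div_iff₀ hx] at h
  rw [gammaHalfRatio, div_pow, le_div_iff₀ (by positivity)]
  linarith

/-- Watson's bound: `gammaHalfRatio (x + k) ^ 2 / (x + k + 1 / 4)` decreases in `k`, and by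
log-convexity of `Γ` it is at least `(x + k) / (x + k + 1 / 4) → 1`. -/
lemma add_quarter_le_gammaHalfRatio_sq (hx : 0 ≤ x) : x + 1 / 4 ≤ gammaHalfRatio x ^ 2 := by
  set a : ℕ → ℝ := fun k => gammaHalfRatio (x + k) ^ 2 / (x + k + 1 / 4)
  have ha : Antitone a := by
    refine antitone_nat_of_succ_le fun k => ?_
    have hy : 0 ≤ x + k := by positivity
    simp only [a, Nat.cast_succ, ← add_assoc, gammaHalfRatio_add_one (x := x + k) (by linarith)]
    rw [div_le_div_iff₀ (by positivity) (by positivity)]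
    have hpoly :
        (x + k + 1) ^ 2 * (x + k + 1 / 4) ≤ (x + k + 1 / 2) ^ 2 * (x + k + 1 + 1 / 4) := by
      nlinarith
    field_simp
    nlinarith [sq_nonneg (gammaHalfRatio (x + k))]
  have hlower : ∀ k : ℕ, 1 ≤ k → (x + 1 * k) / (x + 1 / 4 + 1 * k) ≤ a 0 := by
    intro k hk
    have hxk : 0 < x + k := by
      have : (1 : ℝ) ≤ k := by exact_mod_cast hk
      linarith
    refine le_trans ?_ (ha (Nat.zero_le k))
    simp only [a, one_mul]
    rw [show x + 1 / 4 + k = x + k + 1 / 4 by ring]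
    gcongr
    exact self_le_gammaHalfRatio_sq hxk
  have h := le_of_tendsto (tendsto_add_mul_div_add_mul_atTop_nhds x (x + 1 / 4) 1 one_ne_zero)
    (eventually_atTop.2 ⟨1, hlower⟩)
  simp only [a, Nat.cast_zero, add_zero, div_one] at h
  rwa [le_div_iff₀ (by positivity), one_mul] at h

lemma gammaHalfRatio_sq_le (hx : 0 ≤ x) :
    gammaHalfRatio x ^ 2 ≤ (x + 1 / 2) ^ 2 / (x + 3 / 4) := by
  have h := add_quarter_le_gammaHalfRatio_sq (x := x + 1 / 2) (by linarith)
  rw [← gammaHalfRatio_mul_gammaHalfRatio_add_half (by linarith), mul_pow,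
    le_div_iff₀ (by positivity)]
  exact mul_le_mul_of_nonneg_left (by linarith) (sq_nonneg _)

lemma gammaHalfRatio_half : gammaHalfRatio (1 / 2) = √π / 2 := by
  rw [gammaHalfRatio, Gamma_add_one (by norm_num),
    Gamma_one_half_eq]
  norm_num [Gamma_one]
  ring

lemma gammaHalfRatio_one : gammaHalfRatio 1 = 2 / √π := by
  have h := gammaHalfRatio_mul_gammaHalfRatio_add_half (x := 1 / 2) (by norm_num)
  rw [gammaHalfRatio_half, show (1 / 2 : ℝ) + 1 / 2 = 1 by norm_num] at h
  have : 0 < √π := sqrt_pos.2 pi_pos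
  field_simp
  linarith

end gammaHalfRatio

section unitBallVolume

variable {n : ℕ}

lemma unitBallVolume_sq_div_mul_eq (hn : 1 ≤ n) :
    unitBallVolume n ^ 2 / (unitBallVolume (n - 1) * unitBallVolume (n + 1)) =
      ((n : ℝ) + 1) / 2 / gammaHalfRatio (n / 2) ^ 2 := by
  set x : ℝ := n / 2 with hx
  have hx0 : 0 ≤ x := by positivity
  have h₀ : unitBallVolume n = π ^ x / Gamma (x + 1) := rfl
  have hpred : unitBallVolume (n - 1) = π ^ (x - 1 / 2) / Gamma (x + 1 / 2) := by
    rw [unitBallVolume, Nat.cast_sub hn]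
    congr 2 <;> push_cast <;> ring
  have hsucc : unitBallVolume (n + 1) = π ^ (x + 1 / 2) / ((x + 1 / 2) * Gamma (x + 1 / 2)) := by
    rw [unitBallVolume, ← Gamma_add_one (by linarith)]
    congr 2 <;> push_cast <;> ring
  have hπ : π ^ (x - 1 / 2) * π ^ (x + 1 / 2) = (π ^ x) ^ 2 := by
    rw [← rpow_add pi_pos, ← rpow_natCast, ← rpow_mul pi_pos.le]
    ring_nf
  have hΓ₁ : 0 < Gamma (x + 1) := Gamma_pos_of_pos (by linarith)
  have hΓ₂ : 0 < Gamma (x + 1 / 2) := Gamma_pos_of_pos (by linarith)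
  have hπx : 0 < π ^ x := rpow_pos_of_pos pi_pos x
  rw [h₀, hpred, hsucc, gammaHalfRatio, div_mul_div_comm, hπ,
    show (n : ℝ) + 1 = 2 * (x + 1 / 2) by rw [hx]; ring]
  field_simp

lemma unitBallVolume_sq_div_mul_one :
    unitBallVolume 1 ^ 2 / (unitBallVolume (1 - 1) * unitBallVolume (1 + 1)) = 4 / π := by
  rw [unitBallVolume_sq_div_mul_eq le_rfl]
  norm_num [gammaHalfRatio_half, div_pow, sq_sqrt pi_pos.le]

lemma unitBallVolume_sq_div_mul_two :
    unitBallVolume 2 ^ 2 / (unitBallVolume (2 - 1) * unitBallVolume (2 + 1)) = 3 * π / 8 := by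
  rw [unitBallVolume_sq_div_mul_eq (by norm_num)]
  norm_num [gammaHalfRatio_one, div_pow, sq_sqrt pi_pos.le]
  field_simp
  norm_num

lemma div_le_unitBallVolume_sq_div_mul (hn : 1 ≤ n) :
    (2 * (n : ℝ) + 3) / (2 * n + 2) ≤
      unitBallVolume n ^ 2 / (unitBallVolume (n - 1) * unitBallVolume (n + 1)) := by
  have hx : (0 : ℝ) ≤ n / 2 := by positivity
  have hf := gammaHalfRatio_pos (x := n / 2) (by linarith)
  rw [unitBallVolume_sq_div_mul_eq hn, le_div_iff₀ (by positivity)]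
  calc (2 * (n : ℝ) + 3) / (2 * n + 2) * gammaHalfRatio (n / 2) ^ 2
      ≤ (2 * (n : ℝ) + 3) / (2 * n + 2) * ((n / 2 + 1 / 2) ^ 2 / (n / 2 + 3 / 4)) := by
        gcongr
        exact gammaHalfRatio_sq_le hx
    _ = ((n : ℝ) + 1) / 2 := by field_simp; ring

lemma unitBallVolume_sq_div_mul_le (hn : 1 ≤ n) :
    unitBallVolume n ^ 2 / (unitBallVolume (n - 1) * unitBallVolume (n + 1)) ≤
      (1 + 1 / (n : ℝ)) ^ ((1 : ℝ) / 2) := by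
  have hn₀ : (0 : ℝ) < n := by exact_mod_cast hn
  have hf := add_quarter_le_gammaHalfRatio_sq (x := n / 2) (by positivity)
  have hratio : ((n : ℝ) + 1) / 2 / gammaHalfRatio (n / 2) ^ 2 ≤ 2 * (n + 1) / (2 * n + 1) := by
    rw [div_le_div_iff₀ (by linarith) (by positivity)]
    nlinarith
  rw [unitBallVolume_sq_div_mul_eq hn, ← sqrt_eq_rpow, le_sqrt (by positivity) (by positivity)]
  calc (((n : ℝ) + 1) / 2 / gammaHalfRatio (n / 2) ^ 2) ^ 2
      ≤ (2 * (n + 1) / (2 * n + 1)) ^ 2 := by gcongr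
    _ ≤ 1 + 1 / (n : ℝ) := by
        rw [div_pow, div_le_iff₀ (by positivity)]
        field_simp
        nlinarith

end unitBallVolume

lemma two_rpow_two_sub_log_pi_div_log_two : (2 : ℝ) ^ (2 - log π / log 2) = 4 / π := by
  rw [rpow_sub two_pos, show log π / log 2 = logb 2 π from rfl,
    rpow_logb two_pos (by norm_num) pi_pos]
  norm_num

lemma two_sub_log_pi_div_log_two_nonneg : 0 ≤ 2 - log π / log 2 := by
  rw [sub_nonneg, div_le_iff₀ (log_pos one_lt_two), ← log_rpow two_pos]
  exact log_le_log pi_pos (by norm_num; linarith [pi_lt_four])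

lemma two_sub_log_pi_div_log_two_le : 2 - log π / log 2 ≤ 6 / 17 := by
  have h : (2 : ℝ) ^ 28 ≤ π ^ 17 :=
    calc (2 : ℝ) ^ 28 ≤ 3.14 ^ 17 := by norm_num
      _ ≤ π ^ 17 := by gcongr; exact pi_gt_d2.le
  have hlog := log_le_log (by positivity) h
  rw [log_pow, log_pow] at hlog
  rw [sub_le_iff_le_add, ← sub_le_iff_le_add', le_div_iff₀ (log_pos one_lt_two)]
  push_cast at hlog
  linarith

lemma one_add_inv_rpow_le_unitBallVolume_sq_div_mul {n : ℕ} (hn : 1 ≤ n) :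
    (1 + 1 / (n : ℝ)) ^ (2 - log π / log 2) ≤
      unitBallVolume n ^ 2 / (unitBallVolume (n - 1) * unitBallVolume (n + 1)) := by
  have hα₀ := two_sub_log_pi_div_log_two_nonneg
  have hα := two_sub_log_pi_div_log_two_le
  obtain rfl | rfl | hn₃ : n = 1 ∨ n = 2 ∨ 3 ≤ n := by omega
  · rw [unitBallVolume_sq_div_mul_one]
    norm_num [two_rpow_two_sub_log_pi_div_log_two]
  · have hbernoulli := rpow_one_add_le_one_add_mul_self (s := 1 / (2 : ℕ)) (by norm_num) hα₀
      (by linarith)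
    rw [unitBallVolume_sq_div_mul_two]
    refine hbernoulli.trans ?_
    norm_num
    linarith [pi_gt_d2]
  · have hn₀ : (3 : ℝ) ≤ n := by exact_mod_cast hn₃
    have hbernoulli := rpow_one_add_le_one_add_mul_self (s := 1 / (n : ℝ))
      (by linarith [show (0 : ℝ) ≤ 1 / n by positivity]) hα₀ (by linarith)
    refine hbernoulli.trans (le_trans ?_ (div_le_unitBallVolume_sq_div_mul hn))
    rw [show (2 * (n : ℝ) + 3) / (2 * n + 2) = 1 + 1 / (2 * n + 2) by field_simp; ring,
      add_le_add_iff_left, mul_one_div, div_le_div_iff₀ (by positivity) (by positivity)]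
    nlinarith

lemma le_of_forall_one_add_inv_rpow_le_unitBallVolume_sq_div_mul {α : ℝ}
    (h : ∀ n : ℕ, 1 ≤ n → (1 + 1 / (n : ℝ)) ^ α ≤
      unitBallVolume n ^ 2 / (unitBallVolume (n - 1) * unitBallVolume (n + 1))) :
    α ≤ 2 - log π / log 2 := by
  have h₁ := h 1 le_rfl
  rw [unitBallVolume_sq_div_mul_one, Nat.cast_one, div_one, one_add_one_eq_two,
    ← two_rpow_two_sub_log_pi_div_log_two] at h₁
  exact (rpow_le_rpow_left_iff one_lt_two).1 h₁

lemma half_le_of_forall_unitBallVolume_sq_div_mul_le_rpow {β : ℝ}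
    (h : ∀ n : ℕ, 1 ≤ n →
      unitBallVolume n ^ 2 / (unitBallVolume (n - 1) * unitBallVolume (n + 1)) ≤
        (1 + 1 / (n : ℝ)) ^ β) : 1 / 2 ≤ β := by
  have key : ∀ n : ℕ, 1 ≤ n → (0 + 1 * (n : ℝ)) / (3 + 2 * n) ≤ β := by
    intro n hn
    have hn₀ : (0 : ℝ) < n := by exact_mod_cast hn
    have hq : 0 < 1 + 1 / (n : ℝ) := by positivity
    have hlog := log_le_log (by positivity) ((div_le_unitBallVolume_sq_div_mul hn).trans (h n hn))
    rw [log_rpow hq] at hlog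
    have hlow := one_sub_inv_le_log_of_pos (x := (2 * (n : ℝ) + 3) / (2 * n + 2)) (by positivity)
    rw [inv_div, show 1 - (2 * (n : ℝ) + 2) / (2 * n + 3) = 1 / (2 * n + 3) by field_simp; ring]
      at hlow
    have hupp : log (1 + 1 / (n : ℝ)) ≤ 1 / n := by linarith [log_le_sub_one_of_pos hq]
    have hpos : 0 < log (1 + 1 / (n : ℝ)) := log_pos (by simp [hn₀])
    have h₁ : 1 ≤ (2 * n + 3) * (β * log (1 + 1 / (n : ℝ))) := by
      rw [← div_le_iff₀' (by positivity)]; linarith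
    have h₂ : n * log (1 + 1 / (n : ℝ)) ≤ 1 := by rwa [← le_div_iff₀' hn₀]
    rw [zero_add, one_mul, div_le_iff₀ (by positivity)]
    nlinarith
  exact le_of_tendsto (tendsto_add_mul_div_add_mul_atTop_nhds 0 3 1 two_ne_zero)
    (eventually_atTop.2 ⟨1, key⟩)

theorem alzer_ball_logconvexity :
    (∀ n : ℕ, 1 ≤ n →
      (1 + 1 / (n : ℝ)) ^ (2 - Real.log π / Real.log 2) ≤
        unitBallVolume n ^ 2 / (unitBallVolume (n - 1) * unitBallVolume (n + 1)) ∧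
      unitBallVolume n ^ 2 / (unitBallVolume (n - 1) * unitBallVolume (n + 1)) ≤
        (1 + 1 / (n : ℝ)) ^ ((1 : ℝ) / 2)) ∧
    (∀ α : ℝ, (∀ n : ℕ, 1 ≤ n →
        (1 + 1 / (n : ℝ)) ^ α ≤
          unitBallVolume n ^ 2 / (unitBallVolume (n - 1) * unitBallVolume (n + 1))) →
      α ≤ 2 - Real.log π / Real.log 2) ∧
    (∀ β : ℝ, (∀ n : ℕ, 1 ≤ n →
        unitBallVolume n ^ 2 / (unitBallVolume (n - 1) * unitBallVolume (n + 1)) ≤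
          (1 + 1 / (n : ℝ)) ^ β) →
      (1 : ℝ) / 2 ≤ β) := by
  exact ⟨fun n hn => ⟨one_add_inv_rpow_le_unitBallVolume_sq_div_mul hn,
      unitBallVolume_sq_div_mul_le hn⟩,
    fun _ hα => le_of_forall_one_add_inv_rpow_le_unitBallVolume_sq_div_mul hα,
    fun _ hβ => half_le_of_forall_unitBallVolume_sq_div_mul_le_rpow hβ⟩
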